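/- Let V be a finite set, let E ⊆ V × V be a set of directed edges, and let s ≠ t be vertices of V. Suppose P_1, …, P_k are pairwise edge-disjoint directed paths from s to t in (V, E), each of which visits every vertex at most once. Define f : V × V → ℕ by f(u, v) = 1 if (u, v) is an edge of some P_m and f(u, v) = 0 otherwise. Then f satisfies f(u, v) = 0 whenever (u, v) ∉ E, f(u, v) ≤ 1 everywhere, flow conservation Σ_{u} f(u, v) = Σ_{w} f(v, w) at every vertex v ∉ {s, t}, and its value satisfies Σ_{v} f(s, v) − Σ_{v} f(v, s) = k. -/

import Mathlib

open scoped Classical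

/-- A directed path in the graph with edge set `E`: a nonempty list of vertices
whose consecutive pairs are edges. -/
def IsPath {V : Type*} (E : Set (V × V)) (p : List V) : Prop :=
  p ≠ [] ∧ List.Chain' (fun u w => (u, w) ∈ E) p

/-- The edges of a path, i.e. the consecutive pairs of vertices. -/
def pathEdges {V : Type*} (p : List V) : List (V × V) :=
  p.zip p.tail

/-- A directed path from `s` to `t`. -/
def IsPathFromTo {V : Type*} (E : Set (V × V)) (p : List V) (s t : V) : Prop :=
  IsPath E p ∧ p.head? = some s ∧ p.getLast? = some t

/-- Two paths are edge-disjoint: no pair of consecutive vertices occurs as an edge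
of both. -/
def EdgeDisjoint {V : Type*} (p q : List V) : Prop :=
  ∀ e : V × V, e ∈ pathEdges p → e ∉ pathEdges q

/-!
By edge-disjointness, `f` is the sum over `m` of the edge indicators of the paths `P m`, so it
suffices to count edges of a single simple path `p` from `s` to `t`. The edges of `p` entering
`x` correspond to occurrences of `x` in `p.tail`, those leaving `x` to occurrences in
`p.dropLast`; as `p` is simple, each count is `0` or `1`. For `x ∉ {s, t}` both equal `[x ∈ p]`,
while `s` has out-degree `1` and in-degree `0`.
-/

theorem Finset.ite_exists_eq_sum_ite {ι : Type*} [Fintype ι] {p : ι → Prop} [DecidablePred p]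
    [Decidable (∃ i, p i)]
    (hp : ∀ i j, i ≠ j → p i → ¬ p j) :
    (if ∃ i, p i then 1 else 0) = ∑ i, if p i then (1 : ℕ) else 0 := by
  split_ifs with h
  · obtain ⟨i, hi⟩ := h
    rw [Finset.sum_eq_single_of_mem i (Finset.mem_univ i)
      fun j _ hji => if_neg (hp i j hji.symm hi), if_pos hi]
  · exact (Finset.sum_eq_zero fun i _ => if_neg fun hi => h ⟨i, hi⟩).symm

theorem List.sum_ite_mem_eq_ite_mem_map_fst {α β : Type*} [Fintype β] [DecidableEq α]
    [DecidableEq β] {L : List (α × β)}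
    (hL : (L.map Prod.fst).Nodup) (a : α) :
    ∑ b, (if (a, b) ∈ L then (1 : ℕ) else 0) = if a ∈ L.map Prod.fst then 1 else 0 := by
  split_ifs with ha
  · obtain ⟨⟨a, b⟩, hab, rfl⟩ := List.mem_map.1 ha
    refine (Finset.sum_eq_single_of_mem b (Finset.mem_univ b)
      fun c _ hcb => if_neg fun hac => ?_).trans (if_pos hab)
    exact hcb (congrArg Prod.snd (List.inj_on_of_nodup_map hL hac hab rfl))
  · exact Finset.sum_eq_zero fun b _ => if_neg fun hab => ha (List.mem_map_of_mem hab)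

theorem List.sum_ite_mem_eq_ite_mem_map_snd {α β : Type*} [Fintype α] [DecidableEq α]
    [DecidableEq β] {L : List (α × β)}
    (hL : (L.map Prod.snd).Nodup) (b : β) :
    ∑ a, (if (a, b) ∈ L then (1 : ℕ) else 0) = if b ∈ L.map Prod.snd then 1 else 0 := by
  have hswap : (L.map Prod.swap).map Prod.fst = L.map Prod.snd := by simp
  have := List.sum_ite_mem_eq_ite_mem_map_fst (hswap ▸ hL) b
  simpa [hswap] using this

theorem List.mem_tail_iff_of_head?_eq {α : Type*} {l : List α} {a x : α} (h : l.head? = some a)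
    (hx : x ≠ a) : x ∈ l.tail ↔ x ∈ l := by
  conv_rhs => rw [List.eq_cons_of_mem_head? h]
  simp [hx]

theorem List.mem_dropLast_iff_of_getLast?_eq {α : Type*} {l : List α} {b x : α}
    (h : l.getLast? = some b) (hx : x ≠ b) : x ∈ l.dropLast ↔ x ∈ l := by
  conv_rhs => rw [← List.dropLast_append_getLast? b h]
  simp [hx]

section

variable {V : Type*}

theorem pathEdges_eq_zip_dropLast_tail : ∀ p : List V, pathEdges p = p.dropLast.zip p.tail
  | [] | [_] => rfl
  | a :: b :: l => by
    have ih := pathEdges_eq_zip_dropLast_tail (b :: l)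
    simp only [pathEdges, List.tail_cons] at ih ⊢
    simp [ih]

theorem map_fst_pathEdges (p : List V) : (pathEdges p).map Prod.fst = p.dropLast := by
  rw [pathEdges_eq_zip_dropLast_tail]
  exact List.map_fst_zip (by simp)

theorem map_snd_pathEdges (p : List V) : (pathEdges p).map Prod.snd = p.tail :=
  List.map_snd_zip (by simp)

theorem IsPath.mem_of_mem_pathEdges {E : Set (V × V)} {p : List V} (hp : IsPath E p)
    {e : V × V} (he : e ∈ pathEdges p) : e ∈ E := by
  rw [pathEdges_eq_zip_dropLast_tail] at he
  exact List.forall₂_zip (List.isChain_iff_forall₂.1 hp.2) he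

variable [Fintype V] [DecidableEq V]

def edgeIndicator (p : List V) (e : V × V) : ℕ :=
  if e ∈ pathEdges p then 1 else 0

theorem sum_edgeIndicator_out {p : List V} (hp : p.Nodup) (x : V) :
    ∑ w, edgeIndicator p (x, w) = if x ∈ p.dropLast then 1 else 0 := by
  rw [← map_fst_pathEdges]
  exact List.sum_ite_mem_eq_ite_mem_map_fst
    (map_fst_pathEdges p ▸ hp.sublist (List.dropLast_sublist p)) x

theorem sum_edgeIndicator_in {p : List V} (hp : p.Nodup) (x : V) :
    ∑ u, edgeIndicator p (u, x) = if x ∈ p.tail then 1 else 0 := by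
  rw [← map_snd_pathEdges]
  exact List.sum_ite_mem_eq_ite_mem_map_snd (map_snd_pathEdges p ▸ hp.tail) x

namespace IsPathFromTo

variable {E : Set (V × V)} {p : List V} {s t : V}

theorem sum_edgeIndicator_in_eq_out (hp : IsPathFromTo E p s t) (hnd : p.Nodup) {x : V}
    (hxs : x ≠ s) (hxt : x ≠ t) :
    ∑ u, edgeIndicator p (u, x) = ∑ w, edgeIndicator p (x, w) := by
  rw [sum_edgeIndicator_in hnd, sum_edgeIndicator_out hnd]
  exact if_congr ((List.mem_tail_iff_of_head?_eq hp.2.1 hxs).trans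
    (List.mem_dropLast_iff_of_getLast?_eq hp.2.2 hxt).symm) rfl rfl

theorem sum_edgeIndicator_out_source (hp : IsPathFromTo E p s t) (hnd : p.Nodup) (hst : s ≠ t) :
    ∑ w, edgeIndicator p (s, w) = 1 := by
  rw [sum_edgeIndicator_out hnd, if_pos ((List.mem_dropLast_iff_of_getLast?_eq hp.2.2 hst).2
    (List.mem_of_mem_head? hp.2.1))]

theorem sum_edgeIndicator_in_source (hp : IsPathFromTo E p s t) (hnd : p.Nodup) :
    ∑ u, edgeIndicator p (u, s) = 0 := by
  rw [sum_edgeIndicator_in hnd, if_neg]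
  rw [List.eq_cons_of_mem_head? hp.2.1] at hnd
  exact (List.nodup_cons.1 hnd).1

end IsPathFromTo

end

/-- Given `k` pairwise edge-disjoint vertex-simple directed paths from
`s` to `t`, the indicator function `f` of their edges is a unit-capacity flow: it is
zero off the edge set, bounded by `1`, conserved at every vertex other than `s` and
`t`, and has value `k` (expressed as `Σ_v f(s,v) = Σ_v f(v,s) + k`). -/
theorem paths_give_flow {V : Type*} [Fintype V] [DecidableEq V]
    (E : Set (V × V)) (s t : V) (hst : s ≠ t)
    (k : ℕ) (P : Fin k → List V)
    (hP : ∀ m, IsPathFromTo E (P m) s t)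
    (hnodup : ∀ m, (P m).Nodup)
    (hdisj : ∀ m m', m ≠ m' → EdgeDisjoint (P m) (P m'))
    (f : V × V → ℕ)
    (hf : ∀ e : V × V, f e = if ∃ m, e ∈ pathEdges (P m) then 1 else 0) :
    (∀ u w : V, (u, w) ∉ E → f (u, w) = 0) ∧
    (∀ u w : V, f (u, w) ≤ 1) ∧
    (∀ x : V, x ≠ s → x ≠ t → ∑ u, f (u, x) = ∑ w, f (x, w)) ∧
    ∑ x, f (s, x) = ∑ x, f (x, s) + k := by
  have hf_sum (e : V × V) : f e = ∑ m, edgeIndicator (P m) e :=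
    (hf e).trans (Finset.ite_exists_eq_sum_ite fun m m' hm he => hdisj m m' hm e he)
  refine ⟨fun u w huw => ?_, fun u w => ?_, fun x hxs hxt => ?_, ?_⟩
  · rw [hf, if_neg]
    rintro ⟨m, hm⟩
    exact huw ((hP m).1.mem_of_mem_pathEdges hm)
  · rw [hf]
    split <;> omega
  · simp only [hf_sum]
    rw [Finset.sum_comm, Finset.sum_comm (γ := V)]
    exact Finset.sum_congr rfl fun m _ => (hP m).sum_edgeIndicator_in_eq_out (hnodup m) hxs hxt
  · simp only [hf_sum]
    rw [Finset.sum_comm, Finset.sum_comm (γ := V)]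
    simp [fun m => (hP m).sum_edgeIndicator_out_source (hnodup m) hst,
      fun m => (hP m).sum_edgeIndicator_in_source (hnodup m)]
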